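/- Consider the Bayesian game setup and fix a player i. Suppose Assumptions 3.1 and 3.2 hold and the conditions of Proposition 3.1 hold (so that ∇_{a_i}ϑ_i(a_i, f_{-i}, ·) is Lipschitz on Θ_i with modulus κ_i, uniformly in a_i and f_{-i}). Then for every measurable rivals' strategy profile f_{-i} and every θ_i ∈ Θ_i, the optimal response 𝒜*_i(f_{-i}, θ_i) := argmax_{a_i∈𝒜_i} ϑ_i(a_i, f_{-i}, θ_i) is a singleton, and it is Lipschitz in the own type: ‖𝒜*_i(f_{-i}, θ'_i) − 𝒜*_i(f_{-i}, θ''_i)‖ ≤ (κ_i/σ_i)‖θ'_i − θ''_i‖ for all θ'_i, θ''_i ∈ Θ_i. -/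

import Mathlib

open MeasureTheory
open scoped InnerProductSpace ENNReal NNReal

noncomputable section

/-- The type space of player `i` : a subset of `ℝ^{d_i}` with the Euclidean norm. -/
abbrev Ty (n : ℕ) (d : Fin n → ℕ) (i : Fin n) : Type := EuclideanSpace ℝ (Fin (d i))

/-- The action space of player `i` : a subset of `ℝ^{z_i}` with the Euclidean norm. -/
abbrev Ac (n : ℕ) (z : Fin n → ℕ) (i : Fin n) : Type := EuclideanSpace ℝ (Fin (z i))

/-- The space `Θ_{-i}` of type profiles of the rivals of player `i`,
equipped with the Euclidean (`ℓ²`) norm. -/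
abbrev Rv (n : ℕ) (d : Fin n → ℕ) (i : Fin n) : Type :=
  PiLp 2 (fun j : {j : Fin n // j ≠ i} => EuclideanSpace ℝ (Fin (d j.val)))

/-- The space `𝒜_{-i}` of action profiles of the rivals of player `i`. -/
abbrev RvA (n : ℕ) (z : Fin n → ℕ) (i : Fin n) : Type :=
  ∀ j : {j : Fin n // j ≠ i}, EuclideanSpace ℝ (Fin (z j.val))

instance (n : ℕ) (d : Fin n → ℕ) (i : Fin n) : MeasureSpace (Rv n d i) :=
  { volume := Measure.map (WithLp.toLp 2)
      (volume : Measure (∀ j : {j : Fin n // j ≠ i}, EuclideanSpace ℝ (Fin (d j.val)))) }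

/-- The rivals' actions `f_{-i}(θ_{-i})` induced by a strategy profile `f`. -/
def rivalsAct (n : ℕ) (d z : Fin n → ℕ) (i : Fin n)
    (f : ∀ j, Ty n d j → Ac n z j) (t : Rv n d i) : RvA n z i :=
  fun j => f j.val (t j)

/-- `f` is a strategy profile: each `f_j : Θ_j → 𝒜_j` is measurable. -/
def IsStrat (n : ℕ) (d z : Fin n → ℕ) (Θ : ∀ j, Set (Ty n d j))
    (𝒜 : ∀ j, Set (Ac n z j)) (f : ∀ j, Ty n d j → Ac n z j) : Prop :=
  ∀ j, Measurable (f j) ∧ Set.MapsTo (f j) (Θ j) (𝒜 j)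

/-- The expected utility `ϑ_i(a_i, f_{-i}, θ_i)` of player `i`, the expectation
being taken with respect to the conditional distribution `η_i(·|θ_i)` of `θ_{-i}`. -/
def vth (n : ℕ) (d z : Fin n → ℕ) (i : Fin n)
    (u : Ac n z i → RvA n z i → Ty n d i → Rv n d i → ℝ)
    (cond : Ty n d i → Measure (Rv n d i))
    (a : Ac n z i) (f : ∀ j, Ty n d j → Ac n z j) (θi : Ty n d i) : ℝ :=
  ∫ t, u a (rivalsAct n d z i f t) θi t ∂(cond θi)

/-!
The first-order conditions at a maximizer `b₁` of `g₁` and a maximizer `b₂` of `g₂` over a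
convex set, added to the `σ`-strong monotonicity of `-∇g₁`, give
`σ ‖b₁ - b₂‖ ≤ ‖∇g₁ b₂ - ∇g₂ b₂‖`. Differentiating under the integral transfers the strong
monotonicity of `-∇_{a_i} u_i` to `-∇_{a_i} ϑ_i`. Taking `g₁ = g₂ = ϑ_i(·, f_{-i}, θ_i)` gives
uniqueness of the maximizer (existence is by compactness), and taking the expected utilities
at two own types, the right-hand side is at most `κ_i ‖θ'_i - θ''_i‖`.
-/

section

variable {E : Type*} [NormedAddCommGroup E] [InnerProductSpace ℝ E] [CompleteSpace E]

theorem IsMaxOn.inner_gradient_sub_nonpos {S : Set E} (hS : Convex ℝ S) {g : E → ℝ} {b x : E}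
    (hmax : IsMaxOn g S b) (hb : b ∈ S) (hx : x ∈ S) (hg : DifferentiableAt ℝ g b) :
    ⟪gradient g b, x - b⟫_ℝ ≤ 0 :=
  hmax.localize.hasFDerivWithinAt_nonpos hg.hasGradientAt.hasFDerivAt.hasFDerivWithinAt
    (mem_posTangentConeAt_of_segment_subset (by simpa using hS.segment_subset hb hx))

theorem inner_integral_sub_integral_le {Ω : Type*} [MeasurableSpace Ω] {μ : Measure Ω}
    [IsProbabilityMeasure μ] {F₁ F₂ : Ω → E} (h₁ : Integrable F₁ μ) (h₂ : Integrable F₂ μ)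
    {v : E} {c : ℝ} (h : ∀ᵐ t ∂μ, ⟪F₁ t - F₂ t, v⟫_ℝ ≤ c) :
    ⟪∫ t, F₁ t ∂μ - ∫ t, F₂ t ∂μ, v⟫_ℝ ≤ c := by
  rw [← integral_sub h₁ h₂, real_inner_comm,
    ← integral_inner (f := fun t => F₁ t - F₂ t) (h₁.sub h₂)]
  calc ∫ t, ⟪v, F₁ t - F₂ t⟫_ℝ ∂μ ≤ ∫ _, c ∂μ :=
        integral_mono_ae ((h₁.sub h₂).const_inner v) (integrable_const c)
          (h.mono fun t ht => by rwa [real_inner_comm] at ht)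
    _ = c := by simp

theorem mul_norm_sub_le_of_isMaxOn {S : Set E} (hS : Convex ℝ S) {g₁ g₂ : E → ℝ} {b₁ b₂ : E}
    {σ : ℝ} (hb₁ : b₁ ∈ S) (hb₂ : b₂ ∈ S) (hmax₁ : IsMaxOn g₁ S b₁) (hmax₂ : IsMaxOn g₂ S b₂)
    (hg₁ : DifferentiableAt ℝ g₁ b₁) (hg₂ : DifferentiableAt ℝ g₂ b₂)
    (hmono : ⟪gradient g₁ b₁ - gradient g₁ b₂, b₁ - b₂⟫_ℝ ≤ -σ * ‖b₁ - b₂‖ ^ 2) :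
    σ * ‖b₁ - b₂‖ ≤ ‖gradient g₁ b₂ - gradient g₂ b₂‖ := by
  have foc₁ := hmax₁.inner_gradient_sub_nonpos hS hb₁ hb₂ hg₁
  have foc₂ := hmax₂.inner_gradient_sub_nonpos hS hb₂ hb₁ hg₂
  have hcs := real_inner_le_norm (gradient g₁ b₂ - gradient g₂ b₂) (b₁ - b₂)
  rw [← neg_sub b₁, inner_neg_right] at foc₁
  rw [inner_sub_left] at hmono hcs
  rcases (norm_nonneg (b₁ - b₂)).eq_or_lt with h0 | hpos
  · rw [← h0, mul_zero]; exact norm_nonneg _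
  · refine le_of_mul_le_mul_right ?_ hpos
    nlinarith

end

theorem stmt_1_general
    (n : ℕ) (d z : Fin n → ℕ) (i : Fin n)
    (Θ : ∀ j, Set (Ty n d j)) (𝒜 : ∀ j, Set (Ac n z j))
    (h𝒜 : ∀ j, (𝒜 j).Nonempty ∧ IsCompact (𝒜 j) ∧ Convex ℝ (𝒜 j))
    (cond : Ty n d i → Measure (Rv n d i))
    (hprob : ∀ θi, IsProbabilityMeasure (cond θi))
    (u : Ac n z i → RvA n z i → Ty n d i → Rv n d i → ℝ)
    -- Assumption 3.1(b): differentiation under the integral sign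
    (hexch : ∀ f : ∀ j, Ty n d j → Ac n z j, IsStrat n d z Θ 𝒜 f →
      ∀ θi ∈ Θ i, ∀ a : Ac n z i,
        Integrable (fun t => gradient (fun b => u b (rivalsAct n d z i f t) θi t) a)
          (cond θi) ∧
        HasGradientAt (fun b => vth n d z i u cond b f θi)
          (∫ t, gradient (fun b => u b (rivalsAct n d z i f t) θi t) a ∂(cond θi)) a)
    -- Assumption 3.2(a): `σ_i`-strong concavity of `u_i` in `a_i`
    (σ : ℝ) (hσ : 0 < σ)
    (hconc : ∀ (ar : RvA n z i) (θi : Ty n d i) (t : Rv n d i),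
      ∀ a' ∈ 𝒜 i, ∀ a'' ∈ 𝒜 i,
      ⟪gradient (fun b => u b ar θi t) a' - gradient (fun b => u b ar θi t) a'',
        a' - a''⟫_ℝ ≤ -σ * ‖a' - a''‖ ^ 2)
    -- conclusion of Proposition 3.1: `∇_{a_i}ϑ_i` is `κ_i`-Lipschitz in `θ_i`
    (κ : ℝ)
    (hκ : ∀ f : ∀ j, Ty n d j → Ac n z j, IsStrat n d z Θ 𝒜 f →
      ∀ ai ∈ 𝒜 i, ∀ θ' ∈ Θ i, ∀ θ'' ∈ Θ i,
      ‖gradient (fun b => vth n d z i u cond b f θ') ai -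
        gradient (fun b => vth n d z i u cond b f θ'') ai‖ ≤ κ * ‖θ' - θ''‖) :
    ∀ f : ∀ j, Ty n d j → Ac n z j, IsStrat n d z Θ 𝒜 f →
      -- the optimal response is a singleton …
      (∀ θi ∈ Θ i, ∃! b : Ac n z i, b ∈ 𝒜 i ∧
        ∀ x ∈ 𝒜 i, vth n d z i u cond x f θi ≤ vth n d z i u cond b f θi) ∧
      -- … and is `(κ/σ)`-Lipschitz in the own type
      (∀ θ' ∈ Θ i, ∀ θ'' ∈ Θ i, ∀ b' b'' : Ac n z i,
        (b' ∈ 𝒜 i ∧ ∀ x ∈ 𝒜 i, vth n d z i u cond x f θ' ≤ vth n d z i u cond b' f θ') →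
        (b'' ∈ 𝒜 i ∧ ∀ x ∈ 𝒜 i, vth n d z i u cond x f θ'' ≤ vth n d z i u cond b'' f θ'') →
        ‖b' - b''‖ ≤ (κ / σ) * ‖θ' - θ''‖) := by
  intro f hf
  obtain ⟨hne, hcompact, hconvex⟩ := h𝒜 i
  have hdiff : ∀ θi ∈ Θ i, Differentiable ℝ (fun b => vth n d z i u cond b f θi) :=
    fun θi hθ a => (hexch f hf θi hθ a).2.differentiableAt
  have hmono : ∀ θi ∈ Θ i, ∀ a' ∈ 𝒜 i, ∀ a'' ∈ 𝒜 i,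
      ⟪gradient (fun b => vth n d z i u cond b f θi) a' -
        gradient (fun b => vth n d z i u cond b f θi) a'', a' - a''⟫_ℝ ≤
        -σ * ‖a' - a''‖ ^ 2 := by
    intro θi hθ a' ha' a'' ha''
    have := hprob θi
    rw [(hexch f hf θi hθ a').2.gradient, (hexch f hf θi hθ a'').2.gradient]
    exact inner_integral_sub_integral_le (hexch f hf θi hθ a').1 (hexch f hf θi hθ a'').1
      (.of_forall fun t => hconc _ θi t a' ha' a'' ha'')
  have hsep : ∀ θ' ∈ Θ i, ∀ θ'' ∈ Θ i, ∀ b' ∈ 𝒜 i, ∀ b'' ∈ 𝒜 i,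
      IsMaxOn (fun b => vth n d z i u cond b f θ') (𝒜 i) b' →
      IsMaxOn (fun b => vth n d z i u cond b f θ'') (𝒜 i) b'' →
      σ * ‖b' - b''‖ ≤ ‖gradient (fun b => vth n d z i u cond b f θ') b'' -
        gradient (fun b => vth n d z i u cond b f θ'') b''‖ :=
    fun θ' hθ' θ'' hθ'' b' hb' b'' hb'' hmax' hmax'' =>
      mul_norm_sub_le_of_isMaxOn hconvex hb' hb'' hmax' hmax'' (hdiff θ' hθ' b')
        (hdiff θ'' hθ'' b'') (hmono θ' hθ' b' hb' b'' hb'')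
  refine ⟨fun θi hθ => ?_, fun θ' hθ' θ'' hθ'' b' b'' ⟨hb', hmax'⟩ ⟨hb'', hmax''⟩ => ?_⟩
  · obtain ⟨b, hb, hmax⟩ := hcompact.exists_isMaxOn hne (hdiff θi hθ).continuous.continuousOn
    refine ⟨b, ⟨hb, isMaxOn_iff.1 hmax⟩, fun b' ⟨hb', hmax'⟩ => ?_⟩
    have := hsep θi hθ θi hθ b' hb' b hb (isMaxOn_iff.2 hmax') hmax
    rw [sub_self, norm_zero] at this
    exact sub_eq_zero.1 (norm_le_zero_iff.1 (nonpos_of_mul_nonpos_right this hσ))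
  · rw [div_mul_eq_mul_div, le_div_iff₀ hσ, mul_comm]
    exact (hsep θ' hθ' θ'' hθ'' b' hb' b'' hb'' (isMaxOn_iff.2 hmax')
      (isMaxOn_iff.2 hmax'')).trans (hκ f hf b'' hb'' θ' hθ' θ'' hθ'')

/-- **Theorem 3.1 (own-type part): the optimal response is single-valued and
Lipschitz in the own type.**  Under Assumptions 3.1, 3.2 and the conclusion of
Proposition 3.1 (`∇_{a_i}ϑ_i(a_i, f_{-i}, ·)` is `κ_i`-Lipschitz on `Θ_i`,
uniformly in `a_i` and `f_{-i}`), the optimal response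
`𝒜*_i(f_{-i}, θ_i) = argmax_{a_i ∈ 𝒜_i} ϑ_i(a_i, f_{-i}, θ_i)` is a singleton and
is `(κ_i/σ_i)`-Lipschitz in `θ_i` on `Θ_i`. -/
theorem stmt_1
    (n : ℕ) (d z : Fin n → ℕ) (i : Fin n)
    (Θ : ∀ j, Set (Ty n d j)) (𝒜 : ∀ j, Set (Ac n z j))
    (hΘ : ∀ j, (Θ j).Nonempty ∧ IsCompact (Θ j) ∧ Convex ℝ (Θ j))
    (h𝒜 : ∀ j, (𝒜 j).Nonempty ∧ IsCompact (𝒜 j) ∧ Convex ℝ (𝒜 j))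
    (cond : Ty n d i → Measure (Rv n d i))
    (hprob : ∀ θi, IsProbabilityMeasure (cond θi))
    (u : Ac n z i → RvA n z i → Ty n d i → Rv n d i → ℝ)
    -- Assumption 3.1(a)
    (hC1 : ContDiff ℝ 1 (fun p : Ac n z i × RvA n z i × Ty n d i × Rv n d i =>
      u p.1 p.2.1 p.2.2.1 p.2.2.2))
    -- Assumption 3.1(b): local integrable domination of `∇_{a_i}u_i`
    (hdom : ∀ f : ∀ j, Ty n d j → Ac n z j, IsStrat n d z Θ 𝒜 f →
      ∀ θi ∈ Θ i, ∀ ahat ∈ 𝒜 i, ∃ U : Set (Ac n z i), U ⊆ 𝒜 i ∧ IsClosed U ∧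
        U ∈ nhdsWithin ahat (𝒜 i) ∧ ∃ h : Rv n d i → ℝ, (∀ t, 0 ≤ h t) ∧
          Integrable h (cond θi) ∧ ∀ a ∈ U, ∀ t : Rv n d i,
            ‖gradient (fun b => u b (rivalsAct n d z i f t) θi t) a‖ ≤ h t)
    -- Assumption 3.1(b): differentiation under the integral sign
    (hexch : ∀ f : ∀ j, Ty n d j → Ac n z j, IsStrat n d z Θ 𝒜 f →
      ∀ θi ∈ Θ i, ∀ a : Ac n z i,
        Integrable (fun t => gradient (fun b => u b (rivalsAct n d z i f t) θi t) a)
          (cond θi) ∧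
        HasGradientAt (fun b => vth n d z i u cond b f θi)
          (∫ t, gradient (fun b => u b (rivalsAct n d z i f t) θi t) a ∂(cond θi)) a)
    -- Assumption 3.2(a): `σ_i`-strong concavity of `u_i` in `a_i`
    (σ : ℝ) (hσ : 0 < σ)
    (hconc : ∀ (ar : RvA n z i) (θi : Ty n d i) (t : Rv n d i),
      ∀ a' ∈ 𝒜 i, ∀ a'' ∈ 𝒜 i,
      ⟪gradient (fun b => u b ar θi t) a' - gradient (fun b => u b ar θi t) a'',
        a' - a''⟫_ℝ ≤ -σ * ‖a' - a''‖ ^ 2)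
    -- Assumption 3.2(b): blockwise Lipschitz continuity in rivals' actions
    (τ : Fin n → ℝ)
    (hτ : ∀ (ai : Ac n z i) (θi : Ty n d i) (t : Rv n d i),
      ∀ ar' ar'' : RvA n z i, (∀ j, ar' j ∈ 𝒜 j.val) → (∀ j, ar'' j ∈ 𝒜 j.val) →
      ‖gradient (fun b => u b ar' θi t) ai - gradient (fun b => u b ar'' θi t) ai‖ ≤
        ∑ j : {j : Fin n // j ≠ i}, τ j.val * ‖ar' j - ar'' j‖)
    -- conclusion of Proposition 3.1: `∇_{a_i}ϑ_i` is `κ_i`-Lipschitz in `θ_i`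
    (κ : ℝ)
    (hκ : ∀ f : ∀ j, Ty n d j → Ac n z j, IsStrat n d z Θ 𝒜 f →
      ∀ ai ∈ 𝒜 i, ∀ θ' ∈ Θ i, ∀ θ'' ∈ Θ i,
      ‖gradient (fun b => vth n d z i u cond b f θ') ai -
        gradient (fun b => vth n d z i u cond b f θ'') ai‖ ≤ κ * ‖θ' - θ''‖) :
    ∀ f : ∀ j, Ty n d j → Ac n z j, IsStrat n d z Θ 𝒜 f →
      -- the optimal response is a singleton …
      (∀ θi ∈ Θ i, ∃! b : Ac n z i, b ∈ 𝒜 i ∧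
        ∀ x ∈ 𝒜 i, vth n d z i u cond x f θi ≤ vth n d z i u cond b f θi) ∧
      -- … and is `(κ/σ)`-Lipschitz in the own type
      (∀ θ' ∈ Θ i, ∀ θ'' ∈ Θ i, ∀ b' b'' : Ac n z i,
        (b' ∈ 𝒜 i ∧ ∀ x ∈ 𝒜 i, vth n d z i u cond x f θ' ≤ vth n d z i u cond b' f θ') →
        (b'' ∈ 𝒜 i ∧ ∀ x ∈ 𝒜 i, vth n d z i u cond x f θ'' ≤ vth n d z i u cond b'' f θ'') →
        ‖b' - b''‖ ≤ (κ / σ) * ‖θ' - θ''‖) :=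
  stmt_1_general n d z i Θ 𝒜 h𝒜 cond hprob u hexch σ hσ hconc κ hκ
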